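/- Let Ω be a D-set, A ⊆ Ω a substructure, and C a node splitting (splitting with at least 3 sectors) of A. Then there is at most one splitting C' of Ω extending C (in the sense that every sector of C is the intersection of a sector of C' with A). -/
import Mathlib


/-- A D-relation: 4-ary relation satisfying axioms (D1)-(D4). -/
structure IsDRel {α : Type*} (D : α → α → α → α → Prop) : Prop where
  d1 : ∀ w x y z : α, D w x y z → D x w y z ∧ D y z w x
  d2 : ∀ w x y z : α, D w x y z → ¬ D w y x z
  d3 : ∀ w x y z : α, D w x y z → ∀ v, D v x y z ∨ D w x y v
  d4 : ∀ w x y z : α, w ≠ y → x ≠ y → D w x y y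

/-- A splitting of a subset `S` of a D-set: a partition of `S` into at least two
nonempty sectors satisfying the two splitting conditions. -/
structure IsSplitting {α : Type*} (D : α → α → α → α → Prop) (S : Set α)
    (P : Set (Set α)) : Prop where
  sector_nonempty : ∀ s ∈ P, s.Nonempty
  sector_subset : ∀ s ∈ P, s ⊆ S
  cover : ∀ x ∈ S, ∃ s ∈ P, x ∈ s
  pairwise_disjoint : ∀ s ∈ P, ∀ t ∈ P, s ≠ t → Disjoint s t
  two_sectors : ∃ s ∈ P, ∃ t ∈ P, s ≠ t
  cond1 : ∀ s ∈ P, ∀ a ∈ s, ∀ b ∈ s, ∀ c ∈ S \ s, ∀ d ∈ S \ s, D a b c d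
  cond2 : ∀ s₁ ∈ P, ∀ s₂ ∈ P, ∀ s₃ ∈ P, ∀ s₄ ∈ P,
    s₁ ≠ s₂ → s₁ ≠ s₃ → s₁ ≠ s₄ → s₂ ≠ s₃ → s₂ ≠ s₄ → s₃ ≠ s₄ →
    ∀ a ∈ s₁, ∀ b ∈ s₂, ∀ c ∈ s₃, ∀ d ∈ s₄, ¬ D a b c d

section Aux

variable {α : Type*} {D : α → α → α → α → Prop}

/-- Swap within first pair. -/
lemma IsDRel.swap1 (hD : IsDRel D) {w x y z : α} (h : D w x y z) : D x w y z :=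
  (hD.d1 w x y z h).1

/-- Swap the two pairs. -/
lemma IsDRel.swapP (hD : IsDRel D) {w x y z : α} (h : D w x y z) : D y z w x :=
  (hD.d1 w x y z h).2

/-- Swap within second pair. -/
lemma IsDRel.swap2 (hD : IsDRel D) {w x y z : α} (h : D w x y z) : D w x z y :=
  hD.swapP (hD.swap1 (hD.swapP h))

/-- Characterization of the sector containing `a`, given witnesses in two other
sectors. -/
lemma sector_char1 (hD : IsDRel D) {P : Set (Set α)}
    (hP : IsSplitting D Set.univ P) {p₁ p₂ p₃ : Set α}
    (hp₁ : p₁ ∈ P) (hp₂ : p₂ ∈ P) (hp₃ : p₃ ∈ P)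
    (h12 : p₁ ≠ p₂) (h13 : p₁ ≠ p₃) (h23 : p₂ ≠ p₃)
    {a b c : α} (ha : a ∈ p₁) (hb : b ∈ p₂) (hc : c ∈ p₃) (x : α) :
    x ∈ p₁ ↔ D x a b c := by
  have hbp₁ : b ∉ p₁ := fun h => (hP.pairwise_disjoint p₁ hp₁ p₂ hp₂ h12).ne_of_mem h hb rfl
  have hcp₁ : c ∉ p₁ := fun h => (hP.pairwise_disjoint p₁ hp₁ p₃ hp₃ h13).ne_of_mem h hc rfl
  constructor
  · intro hx
    exact hP.cond1 p₁ hp₁ x hx a ha b ⟨trivial, hbp₁⟩ c ⟨trivial, hcp₁⟩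
  · intro hDx
    by_contra hx
    obtain ⟨p, hp, hxp⟩ := hP.cover x trivial
    have hpp₁ : p ≠ p₁ := fun h => hx (h ▸ hxp)
    by_cases hpp₂ : p = p₂
    · subst hpp₂
      have hap : a ∉ p := fun h => (hP.pairwise_disjoint p hp p₁ hp₁ (Ne.symm h12)).ne_of_mem h ha rfl
      have hcp : c ∉ p := fun h => (hP.pairwise_disjoint p hp p₃ hp₃ h23).ne_of_mem h hc rfl
      have : D x b a c := hP.cond1 p hp x hxp b hb a ⟨trivial, hap⟩ c ⟨trivial, hcp⟩
      exact hD.d2 x b a c this hDx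
    by_cases hpp₃ : p = p₃
    · subst hpp₃
      have hap : a ∉ p := fun h => (hP.pairwise_disjoint p hp p₁ hp₁ (Ne.symm h13)).ne_of_mem h ha rfl
      have hbp : b ∉ p := fun h => (hP.pairwise_disjoint p hp p₂ hp₂ (Ne.symm h23)).ne_of_mem h hb rfl
      have : D x c a b := hP.cond1 p hp x hxp c hc a ⟨trivial, hap⟩ b ⟨trivial, hbp⟩
      exact hD.d2 x c a b this (hD.swap2 hDx)
    · exact hP.cond2 p hp p₁ hp₁ p₂ hp₂ p₃ hp₃ hpp₁ hpp₂ hpp₃ h12 h13 h23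
        x hxp a ha b hb c hc hDx

/-- Characterization of a sector not containing any of `a, b, c`. -/
lemma sector_char2 (hD : IsDRel D) {P : Set (Set α)}
    (hP : IsSplitting D Set.univ P) {p₁ p₂ p₃ p : Set α}
    (hp₁ : p₁ ∈ P) (hp₂ : p₂ ∈ P) (hp₃ : p₃ ∈ P) (hp : p ∈ P)
    (h12 : p₁ ≠ p₂) (h13 : p₁ ≠ p₃) (h23 : p₂ ≠ p₃)
    (hq1 : p ≠ p₁) (hq2 : p ≠ p₂) (hq3 : p ≠ p₃)
    {a b c x : α} (ha : a ∈ p₁) (hb : b ∈ p₂) (hc : c ∈ p₃) (hx : x ∈ p) (y : α) :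
    y ∈ p ↔ D y x a b ∧ D y x b c := by
  have hap : a ∉ p := fun h => (hP.pairwise_disjoint p hp p₁ hp₁ hq1).ne_of_mem h ha rfl
  have hbp : b ∉ p := fun h => (hP.pairwise_disjoint p hp p₂ hp₂ hq2).ne_of_mem h hb rfl
  have hcp : c ∉ p := fun h => (hP.pairwise_disjoint p hp p₃ hp₃ hq3).ne_of_mem h hc rfl
  constructor
  · intro hy
    exact ⟨hP.cond1 p hp y hy x hx a ⟨trivial, hap⟩ b ⟨trivial, hbp⟩,
      hP.cond1 p hp y hy x hx b ⟨trivial, hbp⟩ c ⟨trivial, hcp⟩⟩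
  · rintro ⟨hD1, hD2⟩
    by_contra hy
    obtain ⟨q, hq, hyq⟩ := hP.cover y trivial
    have hqp : q ≠ p := fun h => hy (h ▸ hyq)
    by_cases hqp₁ : q = p₁
    · subst hqp₁
      exact hP.cond2 q hq p hp p₂ hp₂ p₃ hp₃ (Ne.symm hq1) h12 h13 hq2
        hq3 h23 y hyq x hx b hb c hc hD2
    by_cases hqp₂ : q = p₂
    · subst hqp₂
      have hxq : x ∉ q := fun h => (hP.pairwise_disjoint q hq p hp hqp).ne_of_mem h hx rfl
      have haq : a ∉ q := fun h => (hP.pairwise_disjoint q hq p₁ hp₁ (Ne.symm h12)).ne_of_mem h ha rfl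
      have : D y b x a := hP.cond1 q hq y hyq b hb x ⟨trivial, hxq⟩ a ⟨trivial, haq⟩
      exact hD.d2 y b x a this (hD.swap2 hD1)
    by_cases hqp₃ : q = p₃
    · subst hqp₃
      exact hP.cond2 q hq p hp p₁ hp₁ p₂ hp₂ (Ne.symm hq3) (Ne.symm h13) (Ne.symm h23)
        hq1 hq2 h12 y hyq x hx a ha b hb hD1
    · exact hP.cond2 q hq p hp p₁ hp₁ p₂ hp₂ hqp hqp₁ hqp₂ hq1 hq2
        h12 y hyq x hx a ha b hb hD1

/-- If two splittings of the whole space share three distinct sectors, one is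
contained in the other. -/
lemma splitting_subset (hD : IsDRel D) {P Q : Set (Set α)}
    (hP : IsSplitting D Set.univ P) (hQ : IsSplitting D Set.univ Q)
    {p₁ p₂ p₃ : Set α}
    (hp₁P : p₁ ∈ P) (hp₂P : p₂ ∈ P) (hp₃P : p₃ ∈ P)
    (hp₁Q : p₁ ∈ Q) (hp₂Q : p₂ ∈ Q) (hp₃Q : p₃ ∈ Q)
    (h12 : p₁ ≠ p₂) (h13 : p₁ ≠ p₃) (h23 : p₂ ≠ p₃)
    {a b c : α} (ha : a ∈ p₁) (hb : b ∈ p₂) (hc : c ∈ p₃) :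
    P ⊆ Q := by
  intro t ht
  by_cases ht1 : t = p₁
  · exact ht1 ▸ hp₁Q
  by_cases ht2 : t = p₂
  · exact ht2 ▸ hp₂Q
  by_cases ht3 : t = p₃
  · exact ht3 ▸ hp₃Q
  obtain ⟨x, hx⟩ := hP.sector_nonempty t ht
  obtain ⟨u, hu, hxu⟩ := hQ.cover x trivial
  have hx1 : x ∉ p₁ := fun h => (hP.pairwise_disjoint t ht p₁ hp₁P ht1).ne_of_mem hx h rfl
  have hx2 : x ∉ p₂ := fun h => (hP.pairwise_disjoint t ht p₂ hp₂P ht2).ne_of_mem hx h rfl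
  have hx3 : x ∉ p₃ := fun h => (hP.pairwise_disjoint t ht p₃ hp₃P ht3).ne_of_mem hx h rfl
  have hu1 : u ≠ p₁ := fun h => hx1 (h ▸ hxu)
  have hu2 : u ≠ p₂ := fun h => hx2 (h ▸ hxu)
  have hu3 : u ≠ p₃ := fun h => hx3 (h ▸ hxu)
  have : t = u := by
    ext y
    rw [sector_char2 hD hP hp₁P hp₂P hp₃P ht h12 h13 h23 ht1 ht2 ht3 ha hb hc hx y,
      sector_char2 hD hQ hp₁Q hp₂Q hp₃Q hu h12 h13 h23 hu1 hu2 hu3 ha hb hc hxu y]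
  exact this ▸ hu

end Aux

/-- A node splitting (≥ 3 sectors) of a subset A of a D-set Ω extends to at most one
splitting of Ω, where "extends" means every sector of C is the intersection of a
sector of the extension with A. -/
theorem node_splitting_extension_unique {α : Type*} {D : α → α → α → α → Prop}
    (hD : IsDRel D) (A : Set α) (C : Set (Set α))
    (hC : IsSplitting D A C) (h3 : 3 ≤ C.encard)
    (C₁ C₂ : Set (Set α))
    (h₁ : IsSplitting D Set.univ C₁) (h₂ : IsSplitting D Set.univ C₂)
    (he₁ : ∀ s ∈ C, ∃ t ∈ C₁, s = t ∩ A)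
    (he₂ : ∀ s ∈ C, ∃ t ∈ C₂, s = t ∩ A) :
    C₁ = C₂ := by
  -- get three distinct sectors of C
  obtain ⟨s₁, hs₁, s₂, hs₂, hne12⟩ :
      ∃ s₁ ∈ C, ∃ s₂ ∈ C, s₁ ≠ s₂ := by
    obtain ⟨s, hs, t, ht, hst⟩ := hC.two_sectors
    exact ⟨s, hs, t, ht, hst⟩
  have hdiff : (C \ {s₁, s₂}).Nonempty := by
    rw [Set.nonempty_iff_ne_empty]
    intro h
    have hsub : C ⊆ {s₁, s₂} := by
      intro s hs
      by_contra hns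
      exact (Set.eq_empty_iff_forall_notMem.mp h s) ⟨hs, hns⟩
    have h2 : C.encard ≤ 2 := by
      calc C.encard ≤ ({s₁, s₂} : Set (Set α)).encard := Set.encard_mono hsub
        _ = 2 := Set.encard_pair hne12
    have := h3.trans h2
    norm_num at this
  obtain ⟨s₃, hs₃, hs₃ne⟩ := hdiff
  have hne13 : s₁ ≠ s₃ := fun h => hs₃ne (h ▸ Set.mem_insert _ _)
  have hne23 : s₂ ≠ s₃ := fun h => hs₃ne (h ▸ Set.mem_insert_of_mem _ rfl)
  -- lift to C₁ and C₂
  obtain ⟨t₁, ht₁, hs₁t⟩ := he₁ s₁ hs₁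
  obtain ⟨t₂, ht₂, hs₂t⟩ := he₁ s₂ hs₂
  obtain ⟨t₃, ht₃, hs₃t⟩ := he₁ s₃ hs₃
  obtain ⟨u₁, hu₁, hs₁u⟩ := he₂ s₁ hs₁
  obtain ⟨u₂, hu₂, hs₂u⟩ := he₂ s₂ hs₂
  obtain ⟨u₃, hu₃, hs₃u⟩ := he₂ s₃ hs₃
  have ht12 : t₁ ≠ t₂ := fun h => hne12 (by rw [hs₁t, hs₂t, h])
  have ht13 : t₁ ≠ t₃ := fun h => hne13 (by rw [hs₁t, hs₃t, h])
  have ht23 : t₂ ≠ t₃ := fun h => hne23 (by rw [hs₂t, hs₃t, h])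
  have hu12 : u₁ ≠ u₂ := fun h => hne12 (by rw [hs₁u, hs₂u, h])
  have hu13 : u₁ ≠ u₃ := fun h => hne13 (by rw [hs₁u, hs₃u, h])
  have hu23 : u₂ ≠ u₃ := fun h => hne23 (by rw [hs₂u, hs₃u, h])
  obtain ⟨a, ha⟩ := hC.sector_nonempty s₁ hs₁
  obtain ⟨b, hb⟩ := hC.sector_nonempty s₂ hs₂
  obtain ⟨c, hc⟩ := hC.sector_nonempty s₃ hs₃
  have hat : a ∈ t₁ := (hs₁t ▸ ha).1
  have hbt : b ∈ t₂ := (hs₂t ▸ hb).1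
  have hct : c ∈ t₃ := (hs₃t ▸ hc).1
  have hau : a ∈ u₁ := (hs₁u ▸ ha).1
  have hbu : b ∈ u₂ := (hs₂u ▸ hb).1
  have hcu : c ∈ u₃ := (hs₃u ▸ hc).1
  -- the three sectors agree between the two splittings
  have e1 : t₁ = u₁ := by
    ext x
    rw [sector_char1 hD h₁ ht₁ ht₂ ht₃ ht12 ht13 ht23 hat hbt hct x,
      sector_char1 hD h₂ hu₁ hu₂ hu₃ hu12 hu13 hu23 hau hbu hcu x]
  have e2 : t₂ = u₂ := by
    ext x
    rw [sector_char1 hD h₁ ht₂ ht₁ ht₃ (Ne.symm ht12) ht23 ht13 hbt hat hct x,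
      sector_char1 hD h₂ hu₂ hu₁ hu₃ (Ne.symm hu12) hu23 hu13 hbu hau hcu x]
  have e3 : t₃ = u₃ := by
    ext x
    rw [sector_char1 hD h₁ ht₃ ht₁ ht₂ (Ne.symm ht13) (Ne.symm ht23) ht12 hct hat hbt x,
      sector_char1 hD h₂ hu₃ hu₁ hu₂ (Ne.symm hu13) (Ne.symm hu23) hu12 hcu hau hbu x]
  have hu₁' : t₁ ∈ C₂ := e1 ▸ hu₁
  have hu₂' : t₂ ∈ C₂ := e2 ▸ hu₂
  have hu₃' : t₃ ∈ C₂ := e3 ▸ hu₃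
  exact Set.Subset.antisymm
    (splitting_subset hD h₁ h₂ ht₁ ht₂ ht₃ hu₁' hu₂' hu₃' ht12 ht13 ht23 hat hbt hct)
    (splitting_subset hD h₂ h₁ hu₁' hu₂' hu₃' ht₁ ht₂ ht₃ ht12 ht13 ht23 hat hbt hct)
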